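/- For a finite simple graph G with at least one edge, χ(G) > Δ₂(G) if and only if the induced subgraph of G on the vertices of degree at least χ(G) is edgeless. -/

import Mathlib

open SimpleGraph Classical

/-- Chromatic number as a natural number. -/
noncomputable def chromNum {V : Type*} [Fintype V] (G : SimpleGraph V) : ℕ :=
  sInf {n | G.Colorable n}

/-- Degree of a vertex. -/
noncomputable def deg {V : Type*} [Fintype V] (G : SimpleGraph V) (v : V) : ℕ :=
  (G.neighborSet v).ncard

/-- Maximum degree. -/
noncomputable def maxDeg {V : Type*} [Fintype V] (G : SimpleGraph V) : ℕ :=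
  sSup {d | ∃ v, d = deg G v}

/-- Δ₂ : max over edges of the min of the endpoint degrees. -/
noncomputable def delta2 {V : Type*} [Fintype V] (G : SimpleGraph V) : ℕ :=
  sSup {d | ∃ u v, G.Adj u v ∧ d = min (deg G u) (deg G v)}

/-- Ore degree. -/
noncomputable def theta {V : Type*} [Fintype V] (G : SimpleGraph V) : ℕ :=
  sSup {d | ∃ u v, G.Adj u v ∧ d = deg G u + deg G v}

/-- Vertex-critical graph. -/
noncomputable def critical {V : Type*} [Fintype V] (G : SimpleGraph V) : Prop :=
  ∀ v : V, chromNum (G.induce {u | u ≠ v}) < chromNum G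

noncomputable def deltaEps {V : Type*} [Fintype V] (ε : ℝ) (G : SimpleGraph V) : ℕ :=
  ⌊sSup {x : ℝ | ∃ u v, G.Adj u v ∧
      x = (1 - ε) * (min (deg G u) (deg G v) : ℕ) + ε * (max (deg G u) (deg G v) : ℕ)}⌋₊

def FnRel (n : ℕ) : Fin n ⊕ Fin (n - 1) → Fin n ⊕ Fin (n - 1) → Prop
  | Sum.inl i, Sum.inl j => ¬((i : ℕ) = 0 ∧ (j : ℕ) = 1) ∧ ¬((i : ℕ) = 1 ∧ (j : ℕ) = 0)
  | Sum.inr _, Sum.inr _ => True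
  | Sum.inl i, Sum.inr a => ((i : ℕ) = 0 ∧ (a : ℕ) < (n - 1) / 2) ∨ ((i : ℕ) = 1 ∧ (n - 1) / 2 ≤ (a : ℕ))
  | Sum.inr _, Sum.inl _ => False

def Fn (n : ℕ) : SimpleGraph (Fin n ⊕ Fin (n - 1)) := SimpleGraph.fromRel (FnRel n)

section Delta2

variable {V : Type*} [Fintype V] (G : SimpleGraph V)

theorem deg_le_card (v : V) : deg G v ≤ Fintype.card V := by
  simpa [deg, Set.ncard_univ] using Set.ncard_le_ncard (Set.subset_univ (G.neighborSet v))

def edgeMinDegrees : Set ℕ :=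
  {d | ∃ u v, G.Adj u v ∧ d = min (deg G u) (deg G v)}

theorem bddAbove_edgeMinDegrees : BddAbove (edgeMinDegrees G) := by
  refine ⟨Fintype.card V, ?_⟩
  rintro d ⟨u, _, _, rfl⟩
  exact (min_le_left _ _).trans (deg_le_card G u)

variable {G}

theorem min_deg_le_delta2 {u v : V} (huv : G.Adj u v) :
    min (deg G u) (deg G v) ≤ delta2 G :=
  le_csSup (bddAbove_edgeMinDegrees G) ⟨u, v, huv, rfl⟩

-- Without an edge, `delta2 G` is the junk value `sSup ∅ = 0`.
theorem exists_adj_min_deg_eq_delta2 (h : ∃ u v, G.Adj u v) :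
    ∃ u v, G.Adj u v ∧ delta2 G = min (deg G u) (deg G v) := by
  obtain ⟨u, v, huv⟩ := h
  exact Nat.sSup_mem (s := edgeMinDegrees G) ⟨_, u, v, huv, rfl⟩ (bddAbove_edgeMinDegrees G)

theorem delta2_lt_iff (h : ∃ u v, G.Adj u v) (k : ℕ) :
    delta2 G < k ↔ ∀ u v, k ≤ deg G u → k ≤ deg G v → ¬ G.Adj u v := by
  constructor
  · intro hlt u v hu hv huv
    exact (le_min hu hv).trans (min_deg_le_delta2 huv) |>.not_gt hlt
  · intro hind
    obtain ⟨u, v, huv, hdelta⟩ := exists_adj_min_deg_eq_delta2 h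
    by_contra! hk
    exact hind u v (hk.trans (hdelta ▸ min_le_left _ _))
      (hk.trans (hdelta ▸ min_le_right _ _)) huv

end Delta2

theorem stmt4 {V : Type*} [Fintype V] (G : SimpleGraph V) (h : ∃ u v, G.Adj u v) :
    delta2 G < chromNum G ↔
      ∀ u v, chromNum G ≤ deg G u → chromNum G ≤ deg G v → ¬ G.Adj u v :=
  delta2_lt_iff h (chromNum G)
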